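/- Let a, b, D be real numbers with 0 < a < D/2, 0 < b < D/2 and a + b > D/2, and let P > 0. Then ∫_0^∞ ∫_0^∞ x^{a−1} y^{b−1} (x + y)^{−D/2} e^{−P·xy/(x+y)} dx dy = P^{D/2 − a − b} · Γ(a + b − D/2)·Γ(D/2 − a)·Γ(D/2 − b) / Γ(D − a − b). -/

import Mathlib

/-!
Substituting `x = y t` in the inner integral factors the integrand as
`t ^ (a - 1) (1 + t) ^ (-D/2) · y ^ (s - 1) exp (-(P t / (1 + t)) y)` with `s = a + b - D/2`.
After exchanging the order of integration, the `y`-integral is a Gamma integral equal to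
`Γ(s) (P t / (1 + t)) ^ (-s)`, and what remains is the Beta integral of the second kind
`∫ t ^ (u - 1) (1 + t) ^ (-(u + v)) dt = Γ(u) Γ(v) / Γ(u + v)`, `u = D/2 - b`, `v = D/2 - a`,
which the substitution `t = x / (1 - x)` turns into Euler's Beta integral.
The exchange is justified because the same computation, run on the absolute value of the
integrand, gives a finite iterated integral.
-/

open MeasureTheory Set Real

theorem Complex.betaIntegral_ofReal (u v : ℝ) :
    Complex.betaIntegral u v = ↑(∫ x in (0:ℝ)..1, x ^ (u - 1) * (1 - x) ^ (v - 1)) := by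
  rw [Complex.betaIntegral, ← intervalIntegral.integral_ofReal]
  refine intervalIntegral.integral_congr fun x hx => ?_
  rw [uIcc_of_le zero_le_one] at hx
  rw [Complex.ofReal_mul, Complex.ofReal_cpow hx.1, Complex.ofReal_cpow (sub_nonneg.2 hx.2)]
  push_cast
  ring

theorem integral_rpow_mul_one_sub_rpow {u v : ℝ} (hu : 0 < u) (hv : 0 < v) :
    ∫ x in (0:ℝ)..1, x ^ (u - 1) * (1 - x) ^ (v - 1) = Gamma u * Gamma v / Gamma (u + v) := by
  rw [← Complex.ofReal_inj, ← Complex.betaIntegral_ofReal,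
    Complex.betaIntegral_eq_Gamma_mul_div _ _ (by simpa) (by simpa)]
  push_cast
  simp only [← Complex.ofReal_add, Complex.Gamma_ofReal]

theorem hasDerivAt_div_one_sub {x : ℝ} (hx : x ≠ 1) :
    HasDerivAt (fun x : ℝ => x / (1 - x)) ((1 - x) ^ 2)⁻¹ x := by
  have hne : 1 - x ≠ 0 := sub_ne_zero.2 hx.symm
  refine ((hasDerivAt_id' x).div ((hasDerivAt_const x 1).sub (hasDerivAt_id' x)) hne).congr_deriv
    ?_
  simp only [Pi.sub_apply]
  field_simp
  ring

theorem injOn_div_one_sub : InjOn (fun x : ℝ => x / (1 - x)) (Iio 1) := by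
  intro x hx y hy h
  have hx : 1 - x ≠ 0 := by simp at hx; linarith
  have hy : 1 - y ≠ 0 := by simp at hy; linarith
  field_simp at h
  linarith

theorem image_div_one_sub_Ioo : (fun x : ℝ => x / (1 - x)) '' Ioo 0 1 = Ioi 0 := by
  refine subset_antisymm ?_ fun t (ht : 0 < t) => ⟨t / (1 + t), ⟨by positivity, ?_⟩, ?_⟩
  · rintro _ ⟨x, ⟨hx0, hx1⟩, rfl⟩
    exact div_pos hx0 (by linarith)
  · rw [div_lt_one (by positivity)]; linarith
  · have : 1 + t ≠ 0 := by positivity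
    field_simp
    ring

theorem abs_deriv_mul_rpow_div_one_sub {u v x : ℝ} (hx : x ∈ Ioo 0 1) :
    |((1 - x) ^ 2)⁻¹| • ((x / (1 - x)) ^ (u - 1) * (1 + x / (1 - x)) ^ (-(u + v)))
      = x ^ (u - 1) * (1 - x) ^ (v - 1) := by
  obtain ⟨hx0, hx1⟩ := hx
  have h1x : 0 < 1 - x := by linarith
  have e1 : 1 + x / (1 - x) = (1 - x)⁻¹ := by field_simp; ring
  rw [smul_eq_mul, abs_of_pos (by positivity), e1, div_rpow hx0.le h1x.le,
    inv_rpow h1x.le, ← rpow_neg h1x.le, ← rpow_natCast (1 - x) 2,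
    ← rpow_neg h1x.le, div_eq_mul_inv, ← rpow_neg h1x.le, mul_assoc (x ^ (u-1)),
    ← rpow_add h1x, mul_left_comm, ← rpow_add h1x]
  congr 2
  push_cast
  ring

theorem integral_rpow_mul_one_add_rpow_neg {u v : ℝ} (hu : 0 < u) (hv : 0 < v) :
    ∫ t in Ioi (0:ℝ), t ^ (u - 1) * (1 + t) ^ (-(u + v))
      = Gamma u * Gamma v / Gamma (u + v) := by
  rw [← image_div_one_sub_Ioo,
    integral_image_eq_integral_abs_deriv_smul measurableSet_Ioo
    (fun x hx => (hasDerivAt_div_one_sub hx.2.ne).hasDerivWithinAt)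
    (injOn_div_one_sub.mono Ioo_subset_Iio_self),
    setIntegral_congr_fun measurableSet_Ioo fun x hx => abs_deriv_mul_rpow_div_one_sub hx,
    ← integral_Ioc_eq_integral_Ioo, ← intervalIntegral.integral_of_le zero_le_one]
  exact integral_rpow_mul_one_sub_rpow hu hv

theorem integrableOn_rpow_mul_one_add_rpow_neg {u v : ℝ} (hu : 0 < u) (hv : 0 < v) :
    IntegrableOn (fun t : ℝ => t ^ (u - 1) * (1 + t) ^ (-(u + v))) (Ioi 0) :=
  .of_integral_ne_zero (by rw [integral_rpow_mul_one_add_rpow_neg hu hv]; positivity)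

theorem integrableOn_rpow_mul_exp_neg_mul {s r : ℝ} (hs : 0 < s) (hr : 0 < r) :
    IntegrableOn (fun y : ℝ => y ^ (s - 1) * exp (-(r * y))) (Ioi 0) :=
  .of_integral_ne_zero (by rw [integral_rpow_mul_exp_neg_mul_Ioi hs hr]; positivity)

theorem integral_Ioi_integral_Ioi_mul_rpow_mul_exp_neg_mul {g r : ℝ → ℝ} {s : ℝ}
    (hs : 0 < s) (hg : Measurable g) (hr : Measurable r) (hr0 : ∀ t ∈ Ioi (0:ℝ), 0 < r t)
    (hint : IntegrableOn (fun t => g t * (1 / r t) ^ s) (Ioi 0)) :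
    ∫ y in Ioi (0:ℝ), ∫ t in Ioi (0:ℝ), g t * (y ^ (s - 1) * exp (-(r t * y)))
      = Gamma s * ∫ t in Ioi (0:ℝ), g t * (1 / r t) ^ s := by
  have inner (t : ℝ) (ht : t ∈ Ioi 0) :
      ∫ y in Ioi (0:ℝ), y ^ (s - 1) * exp (-(r t * y)) = (1 / r t) ^ s * Gamma s :=
    integral_rpow_mul_exp_neg_mul_Ioi hs (hr0 t ht)
  have hF : Integrable (Function.uncurry fun y t => g t * (y ^ (s - 1) * exp (-(r t * y))))
      ((volume.restrict (Ioi 0)).prod (volume.restrict (Ioi 0))) := by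
    refine (integrable_prod_iff' (Measurable.aestronglyMeasurable (by fun_prop))).2 ⟨?_, ?_⟩
    · filter_upwards [self_mem_ae_restrict measurableSet_Ioi] with t ht
      exact (integrableOn_rpow_mul_exp_neg_mul hs (hr0 t ht)).const_mul (g t)
    · refine (hint.norm.const_mul (Gamma s)).congr ?_
      filter_upwards [self_mem_ae_restrict measurableSet_Ioi] with t ht
      have hnorm : ∀ y ∈ Ioi (0:ℝ), ‖g t * (y ^ (s - 1) * exp (-(r t * y)))‖
          = ‖g t‖ * (y ^ (s - 1) * exp (-(r t * y))) := fun y (hy : 0 < y) => by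
        rw [norm_mul, norm_of_nonneg (by positivity : 0 ≤ y ^ (s - 1) * exp (-(r t * y)))]
      simp only [Function.uncurry_apply_pair]
      rw [setIntegral_congr_fun measurableSet_Ioi hnorm, integral_const_mul, inner t ht,
        norm_mul, norm_of_nonneg (rpow_nonneg (one_div_pos.2 (hr0 t ht)).le s)]
      ring
  rw [integral_integral_swap hF, ← integral_const_mul]
  refine setIntegral_congr_fun measurableSet_Ioi fun t ht => ?_
  rw [integral_const_mul, inner t ht]
  ring

theorem bubble_integral_comp_mul_left {a b D P y : ℝ} (hy : 0 < y) :
    ∫ x in Ioi (0:ℝ), x ^ (a - 1) * y ^ (b - 1) * (x + y) ^ (-(D / 2)) *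
        exp (-P * (x * y) / (x + y))
      = ∫ t in Ioi (0:ℝ), t ^ (a - 1) * (1 + t) ^ (-(D / 2)) *
          (y ^ (a + b - D / 2 - 1) * exp (-(P * t / (1 + t) * y))) := by
  have hscale := integral_comp_mul_left_Ioi (fun x => x ^ (a - 1) * y ^ (b - 1) *
    (x + y) ^ (-(D / 2)) * exp (-P * (x * y) / (x + y))) 0 hy
  rw [mul_zero, smul_eq_mul, eq_inv_mul_iff_mul_eq₀ hy.ne'] at hscale
  rw [← hscale, ← integral_const_mul]
  refine setIntegral_congr_fun measurableSet_Ioi fun t (ht : 0 < t) => ?_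
  have hexp : -P * (y * t * y) / (y * t + y) = -(P * t / (1 + t) * y) := by
    field_simp
    ring
  have hpow : y * (y ^ (a - 1) * y ^ (b - 1) * y ^ (-(D / 2))) = y ^ (a + b - D / 2 - 1) := by
    rw [← rpow_add hy, ← rpow_add hy, mul_comm, ← rpow_add_one hy.ne']
    ring_nf
  rw [hexp, show y * t + y = y * (1 + t) by ring, mul_rpow hy.le ht.le,
    mul_rpow hy.le (by positivity), ← hpow]
  ring

theorem bubble_integrand_schwinger_to_beta {a b D P t : ℝ} (hP : 0 < P) (ht : 0 < t) :
    t ^ (a - 1) * (1 + t) ^ (-(D / 2)) * (1 / (P * t / (1 + t))) ^ (a + b - D / 2)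
      = P ^ (D / 2 - a - b) *
          (t ^ (D / 2 - b - 1) * (1 + t) ^ (-(D / 2 - b + (D / 2 - a)))) := by
  have h1t : 0 < 1 + t := by positivity
  rw [show 1 / (P * t / (1 + t)) = P⁻¹ * t⁻¹ * (1 + t) by field_simp,
    mul_rpow (by positivity) h1t.le, mul_rpow (by positivity) (by positivity),
    inv_rpow hP.le, inv_rpow ht.le, ← rpow_neg hP.le, ← rpow_neg ht.le,
    show D / 2 - b - 1 = (a - 1) + -(a + b - D / 2) by ring, rpow_add ht,
    show -(D / 2 - b + (D / 2 - a)) = -(D / 2) + (a + b - D / 2) by ring, rpow_add h1t,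
    show D / 2 - a - b = -(a + b - D / 2) by ring]
  ring

theorem bubble_diagram_integral (a b D P : ℝ)
    (haD : a < D / 2) (hbD : b < D / 2)
    (hab : D / 2 < a + b) (hP : 0 < P) :
    ∫ y : ℝ in Ioi 0, ∫ x : ℝ in Ioi 0,
        x ^ (a - 1) * y ^ (b - 1) * (x + y) ^ (-(D / 2)) *
          Real.exp (-P * (x * y) / (x + y))
      = P ^ (D / 2 - a - b) *
          (Real.Gamma (a + b - D / 2) * Real.Gamma (D / 2 - a) * Real.Gamma (D / 2 - b) /
            Real.Gamma (D - a - b)) := by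
  have hs : 0 < a + b - D / 2 := by linarith
  have hu : 0 < D / 2 - b := by linarith
  have hv : 0 < D / 2 - a := by linarith
  have hbeta (t : ℝ) (ht : t ∈ Ioi 0) :=
    bubble_integrand_schwinger_to_beta (a := a) (b := b) (D := D) hP ht
  calc _ = ∫ y in Ioi (0:ℝ), ∫ t in Ioi (0:ℝ), t ^ (a - 1) * (1 + t) ^ (-(D / 2)) *
          (y ^ (a + b - D / 2 - 1) * exp (-(P * t / (1 + t) * y))) :=
        setIntegral_congr_fun measurableSet_Ioi fun y hy => bubble_integral_comp_mul_left hy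
    _ = Gamma (a + b - D / 2) * ∫ t in Ioi (0:ℝ),
          t ^ (a - 1) * (1 + t) ^ (-(D / 2)) * (1 / (P * t / (1 + t))) ^ (a + b - D / 2) :=
        integral_Ioi_integral_Ioi_mul_rpow_mul_exp_neg_mul hs (by fun_prop) (by fun_prop)
          (fun t (ht : 0 < t) => by positivity)
          (IntegrableOn.congr_fun ((integrableOn_rpow_mul_one_add_rpow_neg hu hv).const_mul _)
            (fun t ht => (hbeta t ht).symm) measurableSet_Ioi)
    _ = _ := by
      rw [setIntegral_congr_fun measurableSet_Ioi hbeta, integral_const_mul,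
        integral_rpow_mul_one_add_rpow_neg hu hv, show D / 2 - b + (D / 2 - a) = D - a - b by ring]
      ring
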